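/- arXiv:2206.01378 — 3 statements merged into one kernel-verified Lean document; each statement's English description precedes it below -/
import Mathlib

section
/- For each coordinate i, the approximate risk component V_i(λ) = σ_i² (θ*_i)² (λ/(σ_i² + λ))² + (σ²/n) σ_i² (σ_i/(σ_i² + λ))² is minimized over λ > 0 at λ_i = (σ²/n)(θ*_i)⁻², assuming θ*_i ≠ 0, σ_i > 0, σ > 0, n > 0. -/
/-- The per-coordinate approximate risk
`V_i(λ) = σ_i² (θ*_i)² (λ/(σ_i² + λ))² + (σ²/n) σ_i² (σ_i/(σ_i² + λ))²`
is (strictly) minimized over `λ > 0` at `λ_i = (σ²/n)(θ*_i)⁻²`. -/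
theorem per_feature_risk_minimizer (n : ℕ) (hn : 0 < n) (σi σ θi : ℝ)
    (hσi : 0 < σi) (hσ : 0 < σ) (hθ : θi ≠ 0) :
    let V : ℝ → ℝ := fun lam =>
      σi ^ 2 * θi ^ 2 * (lam / (σi ^ 2 + lam)) ^ 2
        + (σ ^ 2 / n) * σi ^ 2 * (σi / (σi ^ 2 + lam)) ^ 2
    let lamstar : ℝ := (σ ^ 2 / n) * (θi ^ 2)⁻¹
    ∀ μ : ℝ, 0 < μ → μ ≠ lamstar → V lamstar < V μ := by
  intro V lamstar μ hμ hne
  have hn' : (0:ℝ) < n := by exact_mod_cast hn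
  have ht : 0 < θi ^ 2 := pow_two_pos_of_ne_zero hθ
  have hs : 0 < σi ^ 2 := pow_pos hσi 2
  have hc : 0 < σ ^ 2 / n := div_pos (pow_pos hσ 2) hn'
  have hstar : 0 < lamstar := mul_pos hc (inv_pos.mpr ht)
  have hd1 : 0 < σi ^ 2 + lamstar := by linarith
  have hd2 : 0 < σi ^ 2 + μ := by linarith
  have hls : lamstar = σ ^ 2 / ↑n * (θi ^ 2)⁻¹ := rfl
  have hkey : θi ^ 2 * μ - σ ^ 2 / n ≠ 0 := by
    intro h
    apply hne
    have hμe : μ = (σ ^ 2 / n) / θi ^ 2 := by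
      field_simp at h ⊢
      linarith [h]
    rw [hμe, hls, div_eq_mul_inv]
  have hsq : 0 < (θi ^ 2 * μ - σ ^ 2 / n) ^ 2 := by positivity
  show σi ^ 2 * θi ^ 2 * (lamstar / (σi ^ 2 + lamstar)) ^ 2
        + (σ ^ 2 / n) * σi ^ 2 * (σi / (σi ^ 2 + lamstar)) ^ 2
      < σi ^ 2 * θi ^ 2 * (μ / (σi ^ 2 + μ)) ^ 2
        + (σ ^ 2 / n) * σi ^ 2 * (σi / (σi ^ 2 + μ)) ^ 2
  rw [hls] at hd1 ⊢
  have hne1 : (σi ^ 2 + σ ^ 2 / n * (θi ^ 2)⁻¹) ≠ 0 := ne_of_gt hd1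
  have hne2 : (σi ^ 2 + μ) ≠ 0 := ne_of_gt hd2
  rw [← sub_pos]
  have hrew : σi ^ 2 * θi ^ 2 * (μ / (σi ^ 2 + μ)) ^ 2 + σ ^ 2 / n * σi ^ 2 * (σi / (σi ^ 2 + μ)) ^ 2
      - (σi ^ 2 * θi ^ 2 * ((σ ^ 2 / n * (θi ^ 2)⁻¹) / (σi ^ 2 + σ ^ 2 / n * (θi ^ 2)⁻¹)) ^ 2
        + σ ^ 2 / n * σi ^ 2 * (σi / (σi ^ 2 + σ ^ 2 / n * (θi ^ 2)⁻¹)) ^ 2)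
      = σi ^ 4 * (θi ^ 2 * μ - σ ^ 2 / n) ^ 2 / ((σi ^ 2 * θi ^ 2 + σ ^ 2 / n) * (σi ^ 2 + μ) ^ 2) := by
    have hne3 : σi ^ 2 * θi ^ 2 + σ ^ 2 / n ≠ 0 := by positivity
    field_simp
    ring
  rw [hrew]
  positivity
end

section
/- If λ_i = σ_i² / (1 − (1 − η_i σ_i²)^t) − σ_i² (with 0 < η_i σ_i² < 1 and t ≥ 1), then for each i: σ_i²(θ*_i)²(λ_i/(σ_i² + λ_i))² = σ_i²(θ*_i)²(1 − η_i σ_i²)^{2t} and (σ²/n)σ_i²(σ_i/(σ_i² + λ_i))² = (σ²/n)σ_i²·(1 − (1−η_i σ_i²)^t)²/σ_i². Consequently the approximate Tikhonov-regularized risk σ² + Σ_i [σ_i²(θ*_i)²(λ_i/(σ_i²+λ_i))² + (σ²/n)σ_i⁴/(σ_i²+λ_i)²] equals the approximate early-stopping risk σ² + Σ_i [σ_i²(θ*_i)²(1−η_i σ_i²)^{2t} + (σ²/n)(1 − (1−η_i σ_i²)^t)²]. -/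
/-!
Put `a = σ_i²` and `r = (1 − η_i σ_i²)^t`, so that `λ_i = a / (1 − r) − a`. Then `a + λ_i = a / (1 − r)`,
hence the Tikhonov shrinkage factors are `a / (a + λ_i) = 1 − r` and `λ_i / (a + λ_i) = r`, which are
exactly the factors of early-stopped gradient descent. Since `0 < 1 − η_i σ_i² < 1` and `t ≥ 1`, we have
`r ≠ 1`, so `a + λ_i ≠ 0`.
-/

section ShrinkageFactors

variable {K : Type*} [Field K] {a r lam : K}

theorem div_add_eq_one_sub_of_eq_div_one_sub_sub (ha : a ≠ 0)
    (hlam : lam = a / (1 - r) - a) : a / (a + lam) = 1 - r := by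
  rw [hlam, add_sub_cancel, div_div_cancel₀ ha]

theorem div_add_eq_of_eq_div_one_sub_sub (ha : a ≠ 0) (hr : r ≠ 1)
    (hlam : lam = a / (1 - r) - a) : lam / (a + lam) = r := by
  have hsum : a + lam ≠ 0 := by
    rw [hlam, add_sub_cancel]
    exact div_ne_zero ha (sub_ne_zero.mpr hr.symm)
  calc lam / (a + lam) = (a + lam - a) / (a + lam) := by rw [add_sub_cancel_left]
    _ = 1 - a / (a + lam) := by rw [sub_div, div_self hsum]
    _ = r := by rw [div_add_eq_one_sub_of_eq_div_one_sub_sub ha hlam, sub_sub_cancel]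

end ShrinkageFactors

theorem tikhonov_equals_early_stopping_general (d n t : ℕ) (ht : 1 ≤ t)
    (σi η θstar : Fin d → ℝ) (σ : ℝ) (hσi : ∀ i, 0 < σi i)
    (hη : ∀ i, 0 < η i * σi i ^ 2 ∧ η i * σi i ^ 2 < 1)
    (lam : Fin d → ℝ)
    (hlam : ∀ i, lam i = σi i ^ 2 / (1 - (1 - η i * σi i ^ 2) ^ t) - σi i ^ 2) :
    (∀ i, σi i ^ 2 * θstar i ^ 2 * (lam i / (σi i ^ 2 + lam i)) ^ 2
        = σi i ^ 2 * θstar i ^ 2 * (1 - η i * σi i ^ 2) ^ (2 * t)) ∧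
    (∀ i, (σ ^ 2 / n) * σi i ^ 2 * (σi i / (σi i ^ 2 + lam i)) ^ 2
        = (σ ^ 2 / n) * σi i ^ 2 * ((1 - (1 - η i * σi i ^ 2) ^ t) ^ 2 / σi i ^ 2)) ∧
    σ ^ 2 + ∑ i,
        (σi i ^ 2 * θstar i ^ 2 * (lam i / (σi i ^ 2 + lam i)) ^ 2
          + (σ ^ 2 / n) * σi i ^ 4 / (σi i ^ 2 + lam i) ^ 2)
      = σ ^ 2 + ∑ i,
        (σi i ^ 2 * θstar i ^ 2 * (1 - η i * σi i ^ 2) ^ (2 * t)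
          + (σ ^ 2 / n) * (1 - (1 - η i * σi i ^ 2) ^ t) ^ 2) := by
  have hσsq (i) : σi i ^ 2 ≠ 0 := pow_ne_zero 2 (hσi i).ne'
  have hr (i) : (1 - η i * σi i ^ 2) ^ t ≠ 1 :=
    (pow_lt_one₀ (by linarith [hη i]) (by linarith [hη i]) (by omega)).ne
  have hbias (i) : σi i ^ 2 * θstar i ^ 2 * (lam i / (σi i ^ 2 + lam i)) ^ 2
      = σi i ^ 2 * θstar i ^ 2 * (1 - η i * σi i ^ 2) ^ (2 * t) := by
    rw [div_add_eq_of_eq_div_one_sub_sub (hσsq i) (hr i) (hlam i), ← pow_mul, mul_comm t]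
  have hvar (i) : σi i ^ 4 / (σi i ^ 2 + lam i) ^ 2 = (1 - (1 - η i * σi i ^ 2) ^ t) ^ 2 := by
    rw [← div_add_eq_one_sub_of_eq_div_one_sub_sub (hσsq i) (hlam i), div_pow]
    ring
  refine ⟨hbias, fun i => ?_, ?_⟩
  · rw [mul_assoc, mul_assoc, mul_div_cancel₀ _ (hσsq i), ← hvar, div_pow]
    ring
  · congr 1
    refine Finset.sum_congr rfl fun i _ => ?_
    rw [hbias, mul_div_assoc, hvar]

/-- With `λ_i = σ_i²/(1 − (1 − η_i σ_i²)^t) − σ_i²` (where `0 < η_i σ_i² < 1`, `t ≥ 1`),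
the bias and variance terms of the Tikhonov risk equal those of early-stopped gradient
descent, and hence the two approximate risks coincide. -/
theorem tikhonov_equals_early_stopping (d n t : ℕ) (ht : 1 ≤ t) (hn : 0 < n)
    (σi η θstar : Fin d → ℝ) (σ : ℝ) (hσi : ∀ i, 0 < σi i)
    (hη : ∀ i, 0 < η i * σi i ^ 2 ∧ η i * σi i ^ 2 < 1)
    (lam : Fin d → ℝ)
    (hlam : ∀ i, lam i = σi i ^ 2 / (1 - (1 - η i * σi i ^ 2) ^ t) - σi i ^ 2) :
    (∀ i, σi i ^ 2 * θstar i ^ 2 * (lam i / (σi i ^ 2 + lam i)) ^ 2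
        = σi i ^ 2 * θstar i ^ 2 * (1 - η i * σi i ^ 2) ^ (2 * t)) ∧
    (∀ i, (σ ^ 2 / n) * σi i ^ 2 * (σi i / (σi i ^ 2 + lam i)) ^ 2
        = (σ ^ 2 / n) * σi i ^ 2 * ((1 - (1 - η i * σi i ^ 2) ^ t) ^ 2 / σi i ^ 2)) ∧
    σ ^ 2 + ∑ i,
        (σi i ^ 2 * θstar i ^ 2 * (lam i / (σi i ^ 2 + lam i)) ^ 2
          + (σ ^ 2 / n) * σi i ^ 4 / (σi i ^ 2 + lam i) ^ 2)
      = σ ^ 2 + ∑ i,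
        (σi i ^ 2 * θstar i ^ 2 * (1 - η i * σi i ^ 2) ^ (2 * t)
          + (σ ^ 2 / n) * (1 - (1 - η i * σi i ^ 2) ^ t) ^ 2) :=
  tikhonov_equals_early_stopping_general d n t ht σi η θstar σ hσi hη lam hlam
end

section
/- Suppose ‖I − X̃ᵀX̃‖ ≤ ε with 0 < ε ≤ min_i(σ_i² + λ)/(2 max_i σ_i²), Σ = diag(σ_1,…,σ_d) with σ_i > 0, and λ > 0. Then ‖Σ²(Σ²X̃ᵀX̃ + λI)⁻¹(I − X̃ᵀX̃) Σθ*‖₂ ≤ 2ε (max_i σ_i²)/(min_i (σ_i² + λ)) ‖Σθ*‖₂. -/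
open Matrix

/-- Spectral (operator) norm of a square real matrix. -/
noncomputable def opN {d : ℕ} (M : Matrix (Fin d) (Fin d) ℝ) : ℝ :=
  ‖Matrix.toEuclideanCLM (𝕜 := ℝ) M‖

/-- Euclidean norm of a vector. -/
noncomputable def norm2 {d : ℕ} (v : Fin d → ℝ) : ℝ :=
  Real.sqrt (∑ i, v i ^ 2)

/-! Write `D = Σ² + λI` and `E = I − X̃ᵀX̃`, so that `Σ²X̃ᵀX̃ + λI = D − Σ²E`. The perturbation
`D⁻¹Σ²E` has norm at most `ε max σ_i² / min (σ_i² + λ) ≤ 1/2`, so a Neumann-series argument makes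
`D − Σ²E` invertible with inverse of norm at most `2‖D⁻¹‖ ≤ 2 / min (σ_i² + λ)`. Submultiplicativity
of the spectral norm then gives the bound. -/

open scoped Matrix.Norms.L2Operator

section NormedRing

variable {R : Type*} [NormedRing R] [HasSummableGeomSeries R] {d p : R}

theorem isUnit_sub_of_norm_inverse_mul_lt_one (hd : IsUnit d) (h : ‖Ring.inverse d * p‖ < 1) :
    IsUnit (d - p) := by
  have : d - p = d * (1 - Ring.inverse d * p) := by
    rw [mul_sub, mul_one, ← mul_assoc, Ring.mul_inverse_cancel d hd, one_mul]
  rw [this]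
  exact hd.mul (Units.oneSub _ h).isUnit

theorem norm_inverse_sub_le (hd : IsUnit d) (h : ‖Ring.inverse d * p‖ < 1) :
    ‖Ring.inverse (d - p)‖ ≤ ‖Ring.inverse d‖ / (1 - ‖Ring.inverse d * p‖) := by
  set z := Ring.inverse (d - p)
  have hz : (d - p) * z = 1 :=
    Ring.mul_inverse_cancel _ (isUnit_sub_of_norm_inverse_mul_lt_one hd h)
  have hfix : z = Ring.inverse d + Ring.inverse d * p * z := by
    have := congrArg (Ring.inverse d * ·) hz
    simp only [mul_one, mul_sub, sub_mul, ← mul_assoc, Ring.inverse_mul_cancel d hd, one_mul] at this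
    exact eq_add_of_sub_eq this
  have : ‖z‖ ≤ ‖Ring.inverse d‖ + ‖Ring.inverse d * p‖ * ‖z‖ :=
    calc ‖z‖ = ‖Ring.inverse d + Ring.inverse d * p * z‖ := by rw [← hfix]
      _ ≤ _ := (norm_add_le _ _).trans (by gcongr; exact norm_mul_le _ _)
  rw [le_div_iff₀ (by linarith)]
  linarith

theorem norm_mul_inverse_sub_mul_le {s e : R} (hd : IsUnit d)
    (h : ‖Ring.inverse d * (s * e)‖ ≤ 1 / 2) :
    ‖s * Ring.inverse (d - s * e) * e‖ ≤ 2 * ‖s‖ * ‖Ring.inverse d‖ * ‖e‖ := by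
  have hinv : ‖Ring.inverse (d - s * e)‖ ≤ 2 * ‖Ring.inverse d‖ := by
    refine (norm_inverse_sub_le hd (by linarith)).trans ?_
    rw [div_le_iff₀ (by linarith)]
    nlinarith [norm_nonneg (Ring.inverse d)]
  calc ‖s * Ring.inverse (d - s * e) * e‖
      ≤ ‖s‖ * ‖Ring.inverse (d - s * e)‖ * ‖e‖ := norm_mul₃_le
    _ ≤ ‖s‖ * (2 * ‖Ring.inverse d‖) * ‖e‖ := by gcongr
    _ = 2 * ‖s‖ * ‖Ring.inverse d‖ * ‖e‖ := by ring

end NormedRing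

theorem Matrix.inv_diagonal_of_ne_zero {n K : Type*} [Fintype n] [DecidableEq n] [Field K]
    {v : n → K} (hv : ∀ i, v i ≠ 0) : (diagonal v)⁻¹ = diagonal v⁻¹ :=
  inv_eq_left_inv <| by
    rw [diagonal_mul_diagonal, ← diagonal_one]
    exact congrArg diagonal (funext fun i => inv_mul_cancel₀ (hv i))

theorem opN_eq_norm {d : ℕ} (M : Matrix (Fin d) (Fin d) ℝ) : opN M = ‖M‖ := rfl

theorem norm2_eq_norm_toLp {d : ℕ} (v : Fin d → ℝ) : norm2 v = ‖WithLp.toLp 2 v‖ := by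
  simp only [norm2, EuclideanSpace.norm_eq, Real.norm_eq_abs, sq_abs]

theorem norm2_mulVec_le {m d : ℕ} (A : Matrix (Fin m) (Fin d) ℝ) (v : Fin d → ℝ) :
    norm2 (A *ᵥ v) ≤ ‖A‖ * norm2 v := by
  rw [norm2_eq_norm_toLp, norm2_eq_norm_toLp]
  exact A.l2_opNorm_mulVec (WithLp.toLp 2 v)

theorem norm_ridge_residual_le {ι : Type*} [Fintype ι] [DecidableEq ι] (s : ι → ℝ)
    (A : Matrix ι ι ℝ) {lam m c ε : ℝ} (hm : 0 ≤ m) (hs : ∀ i, |s i| ≤ m) (hc : 0 < c)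
    (hsc : ∀ i, c ≤ s i + lam) (hA : ‖1 - A‖ ≤ ε) (hε : m * ε ≤ c / 2) :
    ‖diagonal s * (diagonal s * A + lam • 1)⁻¹ * (1 - A)‖ ≤ 2 * m * ε / c := by
  have hD_ne : ∀ i, s i + lam ≠ 0 := fun i => (hc.trans_le (hsc i)).ne'
  have hsplit :
      diagonal s * A + lam • 1 = diagonal (fun i => s i + lam) - diagonal s * (1 - A) := by
    rw [← diagonal_add s fun _ => lam, smul_one_eq_diagonal, mul_sub, mul_one]
    abel
  set D := diagonal fun i => s i + lam
  have hD : IsUnit D := isUnit_diagonal.mpr (Pi.isUnit_iff.mpr fun i => (hD_ne i).isUnit)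
  have hs_norm : ‖diagonal s‖ ≤ m := by
    rw [l2_opNorm_diagonal]
    exact (pi_norm_le_iff_of_nonneg hm).mpr hs
  have hDinv_norm : ‖Ring.inverse D‖ ≤ c⁻¹ := by
    rw [← nonsing_inv_eq_ringInverse, inv_diagonal_of_ne_zero hD_ne, l2_opNorm_diagonal]
    refine (pi_norm_le_iff_of_nonneg (inv_nonneg.mpr hc.le)).mpr fun i => ?_
    rw [Pi.inv_apply, norm_inv, Real.norm_of_nonneg (hc.le.trans (hsc i))]
    exact inv_anti₀ hc (hsc i)
  have hsmall : ‖Ring.inverse D * (diagonal s * (1 - A))‖ ≤ 1 / 2 :=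
    calc ‖Ring.inverse D * (diagonal s * (1 - A))‖
        ≤ ‖Ring.inverse D‖ * (‖diagonal s‖ * ‖1 - A‖) :=
          (norm_mul_le _ _).trans (by gcongr; exact norm_mul_le _ _)
      _ ≤ c⁻¹ * (m * ε) := by gcongr
      _ ≤ 1 / 2 := by
          rw [inv_mul_le_iff₀ hc]
          linarith
  calc ‖diagonal s * (diagonal s * A + lam • 1)⁻¹ * (1 - A)‖
      ≤ 2 * ‖diagonal s‖ * ‖Ring.inverse D‖ * ‖1 - A‖ := by
        rw [hsplit, nonsing_inv_eq_ringInverse]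
        exact norm_mul_inverse_sub_mul_le hD hsmall
    _ ≤ 2 * m * c⁻¹ * ε := by gcongr
    _ = 2 * m * ε / c := by ring

theorem residual_first_term_bound_general (d n : ℕ) (σi : Fin d → ℝ)
    (lam ε : ℝ) (hε0 : 0 < ε)
    (Xt : Matrix (Fin n) (Fin d) ℝ) (θstar : Fin d → ℝ)
    (hε1 : opN (1 - Xtᵀ * Xt) ≤ ε)
    (hε2 : ε ≤ (⨅ i, (σi i ^ 2 + lam)) / (2 * ⨆ i, σi i ^ 2)) :
    let Sm := Matrix.diagonal σi
    norm2 ((Sm ^ 2 * (Sm ^ 2 * (Xtᵀ * Xt) + lam • (1 : Matrix (Fin d) (Fin d) ℝ))⁻¹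
          * (1 - Xtᵀ * Xt)).mulVec (Sm.mulVec θstar))
      ≤ 2 * ε * (⨆ i, σi i ^ 2) / (⨅ i, (σi i ^ 2 + lam)) * norm2 (Sm.mulVec θstar) := by
  intro Sm
  set mx := ⨆ i, σi i ^ 2
  set mn := ⨅ i, (σi i ^ 2 + lam)
  have hmx_nonneg : 0 ≤ mx := Real.iSup_nonneg fun i => sq_nonneg _
  obtain ⟨hmn, hmx⟩ : 0 < mn ∧ 0 < 2 * mx := by
    rcases div_pos_iff.mp (hε0.trans_le hε2) with h | h
    · exact h
    · linarith [h.2]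
  have hσ_le : ∀ i, |σi i ^ 2| ≤ mx := fun i => by
    rw [abs_of_nonneg (sq_nonneg _)]
    exact le_ciSup (f := fun i => σi i ^ 2) (Set.finite_range _).bddAbove i
  have hop := norm_ridge_residual_le (fun i => σi i ^ 2) (Xtᵀ * Xt) hmx_nonneg hσ_le hmn
    (ciInf_le (Set.finite_range _).bddBelow) (opN_eq_norm _ ▸ hε1)
    (by rw [le_div_iff₀ hmx] at hε2; linarith)
  calc norm2 ((Sm ^ 2 * (Sm ^ 2 * (Xtᵀ * Xt) + lam • 1)⁻¹ * (1 - Xtᵀ * Xt)) *ᵥ (Sm *ᵥ θstar))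
      ≤ 2 * mx * ε / mn * norm2 (Sm *ᵥ θstar) := by
        refine (norm2_mulVec_le _ _).trans ?_
        rw [diagonal_pow]
        gcongr
        · exact Real.sqrt_nonneg _
        · exact hop
    _ = 2 * ε * mx / mn * norm2 (Sm *ᵥ θstar) := by ring

/-- If `‖I − X̃ᵀX̃‖ ≤ ε` with `0 < ε ≤ min_i(σ_i² + λ)/(2 max_i σ_i²)`, `σ_i > 0`, `λ > 0`,
then `‖Σ²(Σ²X̃ᵀX̃ + λI)⁻¹(I − X̃ᵀX̃)Σθ*‖₂ ≤ 2ε (max_i σ_i²)/(min_i(σ_i² + λ)) ‖Σθ*‖₂`. -/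
theorem residual_first_term_bound (d n : ℕ) (hd : 0 < d) (σi : Fin d → ℝ)
    (hσi : ∀ i, 0 < σi i) (lam ε : ℝ) (hlam : 0 < lam) (hε0 : 0 < ε)
    (Xt : Matrix (Fin n) (Fin d) ℝ) (θstar : Fin d → ℝ)
    (hε1 : opN (1 - Xtᵀ * Xt) ≤ ε)
    (hε2 : ε ≤ (⨅ i, (σi i ^ 2 + lam)) / (2 * ⨆ i, σi i ^ 2)) :
    let Sm := Matrix.diagonal σi
    norm2 ((Sm ^ 2 * (Sm ^ 2 * (Xtᵀ * Xt) + lam • (1 : Matrix (Fin d) (Fin d) ℝ))⁻¹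
          * (1 - Xtᵀ * Xt)).mulVec (Sm.mulVec θstar))
      ≤ 2 * ε * (⨆ i, σi i ^ 2) / (⨅ i, (σi i ^ 2 + lam)) * norm2 (Sm.mulVec θstar) :=
  residual_first_term_bound_general d n σi lam ε hε0 Xt θstar hε1 hε2
end
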